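/- arXiv:2504.12903 — 5 statements merged into one kernel-verified Lean document; each statement's English description precedes it below -/
import Mathlib

section
/- Let X be a topological space equipped with cell data (P, ε, σ ↦ U_σ) satisfying (P1) and (P2). Then the following are equivalent: (a) for every sheaf of abelian groups F on X, the map Γ(X, F) → Č⁰_P(F) sending a global section s to the family (s|_{U_σ})_{|σ|=0} is injective with image exactly ker(d⁰), i.e. it induces an isomorphism Γ(X, F) ≅ Ȟ⁰_P(F); (b) for every x ∈ X and every abelian group A, the homomorphism A → K⁰(P_x, A) sending a to the constant family is injective with image exactly ker(d⁰ : K⁰(P_x, A) → K¹(P_x, A)). (This is Lemma 3.6 of the paper: condition (b) is the precise cochain-level form of the paper's condition (P3): H⁰(P_x, ℤ) = ℤ.) -/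
open CategoryTheory TopologicalSpace Opposite Function

universe u

/-- Cell data on a topological space `X`: a type of cells with a partial order and
dimension function, an incidence function satisfying the axioms of an incidence function
on a cell complex, and an order-reversing assignment of open sets covering `X`
(conditions (P1) and (P2)). -/
structure CellData (X : Type u) [TopologicalSpace X] : Type (u + 1) where
  /-- the type of cells -/
  P : Type u
  /-- the partial order on cells -/
  [po : PartialOrder P]
  /-- the dimension of each cell -/
  dim : P → ℕ
  /-- the incidence function -/
  eps : P → P → ℤ
  /-- axiom (i): for fixed `σ'` only finitely many `σ` have `eps σ σ' ≠ 0` -/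
  eps_finite : ∀ σ' : P, {σ : P | eps σ σ' ≠ 0}.Finite
  /-- axiom (ii): `eps σ σ' = 0` unless `σ < σ'` and `dim σ' = dim σ + 1` -/
  eps_eq_zero : ∀ σ σ' : P, ¬(σ < σ' ∧ dim σ' = dim σ + 1) → eps σ σ' = 0
  /-- axiom (iii) -/
  eps_comp : ∀ σ σ'' : P, dim σ'' = dim σ + 2 →
    (∑ᶠ σ' : P, eps σ σ' * eps σ' σ'') = 0
  /-- the open set attached to each cell -/
  U : P → Opens X
  /-- condition (P1): the assignment is order reversing -/
  mono : ∀ {σ σ' : P}, σ ≤ σ' → U σ' ≤ U σ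
  /-- condition (P2): the open sets cover `X` -/
  covers : ∀ x : X, ∃ σ : P, x ∈ U σ

attribute [instance] CellData.po

namespace CellData

variable {X : TopCat.{u}} (D : CellData ↥X)

/-- The cells of dimension `i`. -/
abbrev Cells (i : ℕ) : Type u := {σ : D.P // D.dim σ = i}

variable (F : TopCat.Presheaf Ab.{u} X)

/-- The `i`-th term of the reduced Čech complex of the presheaf `F`:
the product of the sections of `F` over the `U σ` for `σ` of dimension `i`. -/
abbrev cochain (i : ℕ) : Type u := ∀ σ : D.Cells i, ↥(F.obj (op (D.U σ.1)))

open scoped Classical in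
/-- For a pair of cells, `eps σ σ'` times the restriction map from `U σ` to `U σ'`
(interpreted as `0` unless `σ ≤ σ'`). -/
noncomputable def pairMap (σ σ' : D.P) :
    ↥(F.obj (op (D.U σ))) →+ ↥(F.obj (op (D.U σ'))) :=
  D.eps σ σ' • (if h : σ ≤ σ' then ((F.map (homOfLE (D.mono h)).op).hom : _ →+ _) else 0)

lemma support_pairMap_finite {i : ℕ} (σ' : D.Cells (i + 1)) (f : D.cochain F i) :
    (Function.support fun σ : D.Cells i => D.pairMap F σ.1 σ'.1 (f σ)).Finite := by
  apply Set.Finite.subset ((D.eps_finite σ'.1).preimage (Set.injOn_of_injective Subtype.val_injective))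
  intro σ hσ
  simp only [Function.mem_support] at hσ
  simp only [Set.mem_preimage, Set.mem_setOf_eq]
  intro hz
  apply hσ
  simp [pairMap, hz]

/-- The differential of the reduced Čech complex. -/
noncomputable def cechDiff (i : ℕ) : D.cochain F i →+ D.cochain F (i + 1) :=
  AddMonoidHom.mk'
    (fun f σ' => ∑ᶠ σ : D.Cells i, D.pairMap F σ.1 σ'.1 (f σ))
    (by
      intro f g
      funext σ'
      have : ∀ σ : D.Cells i, D.pairMap F σ.1 σ'.1 ((f + g) σ)
          = D.pairMap F σ.1 σ'.1 (f σ) + D.pairMap F σ.1 σ'.1 (g σ) := by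
        intro σ
        rw [Pi.add_apply, map_add]
      show (∑ᶠ σ : D.Cells i, D.pairMap F σ.1 σ'.1 ((f + g) σ)) = _
      rw [finsum_congr this,
        finsum_add_distrib (D.support_pairMap_finite F σ' f) (D.support_pairMap_finite F σ' g)]
      rfl)

/-- The cocycles of the reduced Čech complex. -/
noncomputable def cechCocycles (i : ℕ) : AddSubgroup (D.cochain F i) :=
  (D.cechDiff F i).ker

/-- The coboundaries of the reduced Čech complex. -/
noncomputable def cechCoboundaries : (i : ℕ) → AddSubgroup (D.cochain F i)
  | 0 => ⊥
  | (j + 1) => (D.cechDiff F j).range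

/-- The `i`-th reduced Čech cohomology group `Ȟ^i_P(F)`. -/
noncomputable def reducedCechCohomology (i : ℕ) : Type u :=
  ↥(D.cechCocycles F i) ⧸
    ((D.cechCoboundaries F i).addSubgroupOf (D.cechCocycles F i))

noncomputable instance (i : ℕ) : AddCommGroup (D.reducedCechCohomology F i) :=
  QuotientAddGroup.Quotient.addCommGroup _

end CellData

namespace CellData

variable {X : TopCat.{u}} (D : CellData ↥X)

/-- For `x : X`, the cells `σ` of dimension `i` with `x ∈ U σ` (the `i`-cells of `P ₓ`). -/
abbrev KCells (x : ↥X) (i : ℕ) : Type u := {σ : D.P // x ∈ D.U σ ∧ D.dim σ = i}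

/-- The `i`-th term of the complex `K^•(Pₓ, A)`. -/
abbrev KCochain (x : ↥X) (A : Type u) [AddCommGroup A] (i : ℕ) : Type u :=
  D.KCells x i → A

/-- The differential of the complex `K^•(Pₓ, A)`. -/
noncomputable def KDiffFun (x : ↥X) (A : Type u) [AddCommGroup A] (i : ℕ)
    (f : D.KCochain x A i) : D.KCochain x A (i + 1) :=
  fun σ' => ∑ᶠ σ : D.KCells x i, D.eps σ.1 σ'.1 • f σ

/-- Condition (P3'): for every point `x` and every abelian group `A`, the map sending
`a : A` to the constant family in `K⁰(Pₓ, A)` is injective with image exactly the kernel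
of the differential `K⁰(Pₓ, A) → K¹(Pₓ, A)`. -/
def CondP3 : Prop :=
  ∀ (x : ↥X) (A : Type u) [AddCommGroup A],
    Function.Injective (fun (a : A) (_ : D.KCells x 0) => a) ∧
      Set.range (fun (a : A) (_ : D.KCells x 0) => a) =
        {f : D.KCochain x A 0 | D.KDiffFun x A 0 f = 0}

/-- Condition (P4'): for every point `x`, every abelian group `A` and every `i ≥ 1`, the
cohomology of the complex `K^•(Pₓ, A)` in degree `i` vanishes; i.e., every cocycle in
degree `i = j + 1` is a coboundary. -/
def CondP4 : Prop :=
  ∀ (x : ↥X) (A : Type u) [AddCommGroup A] (j : ℕ)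
    (f : D.KCochain x A (j + 1)), D.KDiffFun x A (j + 1) f = 0 →
      ∃ g : D.KCochain x A j, D.KDiffFun x A j g = f

end CellData

/-!
Reading the Čech differential at a point `x` through a family of maps out of the sections over
the neighbourhoods of `x` that is compatible with restriction (the germ maps, say) gives the
differential of `K^•(Pₓ, -)`. If (b) holds, the germs at any point of a Čech `0`-cocycle of a
sheaf therefore form a constant family on the `0`-cells of `Pₓ`, so the components of the cocycle
agree on overlaps and glue; the gluing is unique because (b) forces the `0`-cells to cover `X`.
Conversely, for the skyscraper sheaf at `x` with value `A` the reduced Čech complex in degrees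
`0, 1` is `K^•(Pₓ, A)` and its global sections are `A`, so (a) for this sheaf is (b) at `x`.
-/

lemma injective_and_range_eq_iff_of_comp_eq {S C A K : Type*} {r : S → C} {c : A → K}
    {eS : S → A} {eC : C → K} (heS : Bijective eS) (heC : Bijective eC)
    (h : eC ∘ r = c ∘ eS) (Z : Set K) :
    (Injective r ∧ Set.range r = eC ⁻¹' Z) ↔ (Injective c ∧ Set.range c = Z) := by
  rw [← heC.1.of_comp_iff r, h, Injective.of_comp_iff' c heS, Set.eq_preimage_iff_image_eq heC,
    ← Set.range_comp, h, heS.2.range_comp]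

lemma finsum_eq_finsum_comp_of_support_subset_range {α β M : Type*} [AddCommMonoid M]
    {g : α → M} {ι : β → α} (hι : Injective ι) (hg : support g ⊆ Set.range ι) :
    ∑ᶠ a, g a = ∑ᶠ b, g (ι b) := by
  rw [← finsum_mem_univ, finsum_mem_inter_support_eq' g Set.univ (Set.range ι)
    fun a ha => iff_of_true trivial (hg ha), finsum_mem_range hι]

namespace CellData

variable {X : TopCat.{u}} (D : CellData ↥X)

lemma eps_eq_zero_of_not_le {σ σ' : D.P} (h : ¬ σ ≤ σ') : D.eps σ σ' = 0 :=
  D.eps_eq_zero σ σ' fun hc => h hc.1.le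

lemma eps_eq_zero_of_notMem {x : ↥X} {σ σ' : D.P} (hσ' : x ∈ D.U σ') (hσ : x ∉ D.U σ) :
    D.eps σ σ' = 0 :=
  D.eps_eq_zero_of_not_le fun h => hσ (D.mono h hσ')

lemma pairMap_apply_of_le (F : TopCat.Presheaf Ab.{u} X) {σ σ' : D.P} (h : σ ≤ σ')
    (a : ↥(F.obj (op (D.U σ)))) :
    D.pairMap F σ σ' a = D.eps σ σ' • F.map (homOfLE (D.mono h)).op a := by
  rw [pairMap, dif_pos h]
  rfl

lemma pairMap_eq_zero_of_eps_eq_zero (F : TopCat.Presheaf Ab.{u} X) {σ σ' : D.P}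
    (h : D.eps σ σ' = 0) : D.pairMap F σ σ' = 0 := by
  rw [pairMap, h, zero_smul]

section ToKCochain

variable {F : TopCat.Presheaf Ab.{u} X} {x : ↥X} {B : Type u} [AddCommGroup B]

def toKCochain (φ : ∀ U : Opens ↥X, x ∈ U → ↥(F.obj (op U)) →+ B) (i : ℕ)
    (f : D.cochain F i) : D.KCochain x B i :=
  fun σ => φ (D.U σ.1) σ.2.1 (f ⟨σ.1, σ.2.2⟩)

@[simp]
lemma toKCochain_zero (φ : ∀ U : Opens ↥X, x ∈ U → ↥(F.obj (op U)) →+ B) (i : ℕ) :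
    D.toKCochain φ i 0 = 0 :=
  funext fun _ => map_zero _

lemma toKCochain_cechDiff (φ : ∀ U : Opens ↥X, x ∈ U → ↥(F.obj (op U)) →+ B)
    (hφ : ∀ {U V : Opens ↥X} (h : V ≤ U) (hV : x ∈ V) (a : ↥(F.obj (op U))),
      φ V hV (F.map (homOfLE h).op a) = φ U (h hV) a)
    {i : ℕ} (f : D.cochain F i) :
    D.toKCochain φ (i + 1) (D.cechDiff F i f) = D.KDiffFun x B i (D.toKCochain φ i f) := by
  funext σ'
  let ι : D.KCells x i → D.Cells i := fun σ => ⟨σ.1, σ.2.2⟩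
  have hι : Function.Injective ι := fun σ τ h => Subtype.ext (congrArg (·.1) h :)
  have hsupp : support (fun σ : D.Cells i => φ _ σ'.2.1 (D.pairMap F σ.1 σ'.1 (f σ))) ⊆
      Set.range ι := by
    intro σ hσ
    by_contra hx
    refine hσ ?_
    dsimp only
    rw [D.pairMap_eq_zero_of_eps_eq_zero F (D.eps_eq_zero_of_notMem σ'.2.1
      fun hσx => hx ⟨⟨σ.1, hσx, σ.2⟩, rfl⟩), AddMonoidHom.zero_apply, map_zero]
  change φ _ _ (∑ᶠ σ : D.Cells i, D.pairMap F σ.1 σ'.1 (f σ)) = _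
  rw [AddMonoidHom.map_finsum _ (D.support_pairMap_finite F ⟨σ'.1, σ'.2.2⟩ f),
    finsum_eq_finsum_comp_of_support_subset_range hι hsupp]
  refine finsum_congr fun σ => ?_
  by_cases hle : σ.1 ≤ σ'.1
  · rw [D.pairMap_apply_of_le F hle, map_zsmul, hφ]
    rfl
  · rw [D.pairMap_eq_zero_of_eps_eq_zero F (D.eps_eq_zero_of_not_le hle),
      D.eps_eq_zero_of_not_le hle, AddMonoidHom.zero_apply, map_zero, zero_smul]

end ToKCochain

def restrictCells (F : TopCat.Presheaf Ab.{u} X) (s : ↥(F.obj (op ⊤))) : D.cochain F 0 :=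
  fun _ => F.map (homOfLE le_top).op s

lemma nonempty_kCells_zero (hP3 : D.CondP3) (x : ↥X) : Nonempty (D.KCells x 0) := by
  by_contra hempty
  have h01 : (fun _ : D.KCells x 0 => (0 : ULift.{u} ℤ)) = fun _ => 1 :=
    funext fun σ => (hempty ⟨σ⟩).elim
  exact absurd (congrArg ULift.down ((hP3 x (ULift.{u} ℤ)).1 h01)) zero_ne_one

lemma top_le_iSup_U_cells_zero (hP3 : D.CondP3) :
    (⊤ : Opens ↥X) ≤ ⨆ σ : D.Cells 0, D.U σ.1 := by
  intro y _
  obtain ⟨σ⟩ := D.nonempty_kCells_zero hP3 y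
  exact Opens.mem_iSup.mpr ⟨⟨σ.1, σ.2.2⟩, σ.2.1⟩

section Sheaf

variable (F : TopCat.Sheaf Ab.{u} X)

noncomputable abbrev germs (y : ↥X) (i : ℕ) :
    D.cochain F.1 i → D.KCochain y (F.presheaf.stalk y) i :=
  D.toKCochain (fun U h => (F.presheaf.germ U y h).hom) i

lemma germs_cechDiff (y : ↥X) {i : ℕ} (f : D.cochain F.1 i) :
    D.germs F y (i + 1) (D.cechDiff F.1 i f) = D.KDiffFun y _ i (D.germs F y i f) :=
  D.toKCochain_cechDiff _ (fun h hV a => F.presheaf.germ_res_apply (homOfLE h) _ hV a) f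

lemma germs_restrictCells (y : ↥X) (s : ↥(F.1.obj (op ⊤))) :
    D.germs F y 0 (D.restrictCells F.1 s) = fun _ => F.presheaf.germ ⊤ y trivial s :=
  funext fun _ => F.presheaf.germ_res_apply (homOfLE le_top) y _ s

lemma restrictCells_injective (hP3 : D.CondP3) : Injective (D.restrictCells F.1) :=
  fun s t hst => TopCat.Sheaf.eq_of_locally_eq' F (fun σ : D.Cells 0 => D.U σ.1) ⊤
    (fun _ => homOfLE le_top) (D.top_le_iSup_U_cells_zero hP3) s t (congrFun hst)

lemma cechDiff_restrictCells (hP3 : D.CondP3) (s : ↥(F.1.obj (op ⊤))) :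
    D.cechDiff F.1 0 (D.restrictCells F.1 s) = 0 := by
  funext σ'
  refine TopCat.Presheaf.section_ext F _ _ _ fun y hy => ?_
  have hconst : D.KDiffFun y _ 0 (fun _ => F.presheaf.germ ⊤ y trivial s) = 0 :=
    ((hP3 y (F.presheaf.stalk y)).2.subset ⟨_, rfl⟩ :)
  have hgerm := congrFun (D.germs_cechDiff F y (D.restrictCells F.1 s)) ⟨σ'.1, hy, σ'.2⟩
  rw [D.germs_restrictCells, hconst] at hgerm
  rw [Pi.zero_apply, map_zero]
  exact hgerm

lemma exists_restrictCells_eq (hP3 : D.CondP3) {f : D.cochain F.1 0}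
    (hf : D.cechDiff F.1 0 f = 0) : ∃ s, D.restrictCells F.1 s = f := by
  have hcompat : TopCat.Presheaf.IsCompatible F.1 (fun σ : D.Cells 0 => D.U σ.1) f := by
    intro σ τ
    refine TopCat.Presheaf.section_ext F _ _ _ fun y hy => ?_
    obtain ⟨hyσ, hyτ⟩ := hy
    obtain ⟨a, ha⟩ : D.germs F y 0 f ∈ Set.range fun a _ => a := by
      rw [(hP3 y _).2, Set.mem_setOf_eq, ← D.germs_cechDiff, hf]
      exact funext fun _ => map_zero _
    exact (F.presheaf.germ_res_apply _ _ _ _).trans ((congrFun ha ⟨σ.1, hyσ, σ.2⟩).symm.trans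
      ((congrFun ha ⟨τ.1, hyτ, τ.2⟩).trans (F.presheaf.germ_res_apply _ _ _ _).symm))
  obtain ⟨s, hs, -⟩ := TopCat.Sheaf.existsUnique_gluing' F (fun σ : D.Cells 0 => D.U σ.1) ⊤
    (fun _ => homOfLE le_top) (D.top_le_iSup_U_cells_zero hP3) f hcompat
  exact ⟨s, funext hs⟩

lemma range_restrictCells (hP3 : D.CondP3) :
    Set.range (D.restrictCells F.1) = {f | D.cechDiff F.1 0 f = 0} :=
  Set.Subset.antisymm (Set.range_subset_iff.2 (D.cechDiff_restrictCells F hP3))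
    fun _ hf => D.exists_restrictCells_eq F hP3 hf

end Sheaf

end CellData

section Skyscraper

variable {X : TopCat.{u}} (x : ↥X) (A : Ab.{u}) [∀ U : Opens ↥X, Decidable (x ∈ U)]

/-- Going through the stalk makes compatibility with restrictions a case of `germ_res`. -/
noncomputable def skyscraperEval (U : Opens ↥X) (h : x ∈ U) :
    ↥((skyscraperPresheaf x A).obj (op U)) →+ A :=
  ((skyscraperPresheaf x A).germ U x h ≫
    (skyscraperPresheafStalkOfSpecializes x A specializes_rfl).hom).hom

lemma skyscraperEval_bijective (U : Opens ↥X) (h : x ∈ U) :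
    Bijective (skyscraperEval x A U h) := by
  rw [skyscraperEval, germ_skyscraperPresheafStalkOfSpecializes_hom]
  exact ConcreteCategory.bijective_of_isIso (C := Ab.{u}) (eqToHom _)

lemma skyscraperEval_map {U V : Opens ↥X} (h : V ≤ U) (hV : x ∈ V)
    (a : ↥((skyscraperPresheaf x A).obj (op U))) :
    skyscraperEval x A V hV ((skyscraperPresheaf x A).map (homOfLE h).op a) =
      skyscraperEval x A U (h hV) a := by
  simp only [skyscraperEval, AddCommGrpCat.hom_comp, AddMonoidHom.coe_comp, comp_apply,
    TopCat.Presheaf.germ_res_apply]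

lemma subsingleton_skyscraperPresheaf_obj {U : Opens ↥X} (h : x ∉ U) :
    Subsingleton ↥((skyscraperPresheaf x A).obj (op U)) :=
  AddCommGrpCat.subsingleton_of_isZero
    (isTerminalSkyscraperSheafObjObjOfNotMem (A := A) (U := op U) h).isZero

end Skyscraper

namespace CellData

variable {X : TopCat.{u}} (D : CellData ↥X) (x : ↥X) (A : Ab.{u})
  [∀ U : Opens ↥X, Decidable (x ∈ U)]

/-- Components over cells not containing `x` live in the zero group. -/
lemma toKCochain_skyscraperEval_bijective (i : ℕ) :
    Bijective (D.toKCochain (skyscraperEval x A) i) := by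
  refine ⟨fun f g hfg => funext fun σ => ?_, fun k => ?_⟩
  · by_cases hx : x ∈ D.U σ.1
    · exact (skyscraperEval_bijective x A _ hx).1 (congrFun hfg ⟨σ.1, hx, σ.2⟩)
    · have := subsingleton_skyscraperPresheaf_obj x A hx
      exact Subsingleton.elim _ _
  · refine ⟨fun σ => if hx : x ∈ D.U σ.1 then
      surjInv (skyscraperEval_bijective x A _ hx).2 (k ⟨σ.1, hx, σ.2⟩) else 0,
      funext fun σ => ?_⟩
    simp only [toKCochain, dif_pos σ.2.1, surjInv_eq]

lemma toKCochain_skyscraperEval_restrictCells (s : ↥((skyscraperPresheaf x A).obj (op ⊤))) :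
    D.toKCochain (skyscraperEval x A) 0 (D.restrictCells _ s) =
      fun _ => skyscraperEval x A ⊤ trivial s :=
  funext fun _ => skyscraperEval_map x A le_top _ s

lemma condP3_at_of_skyscraper
    (h : Injective (D.restrictCells (skyscraperPresheaf x A)) ∧
      Set.range (D.restrictCells (skyscraperPresheaf x A)) =
        {f | D.cechDiff (skyscraperPresheaf x A) 0 f = 0}) :
    Injective (fun (a : A) (_ : D.KCells x 0) => a) ∧
      Set.range (fun (a : A) (_ : D.KCells x 0) => a) = {f | D.KDiffFun x A 0 f = 0} := by
  have hker : {f | D.cechDiff (skyscraperPresheaf x A) 0 f = 0} =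
      D.toKCochain (skyscraperEval x A) 0 ⁻¹' {f | D.KDiffFun x A 0 f = 0} := by
    ext f
    rw [Set.mem_preimage, Set.mem_setOf_eq, Set.mem_setOf_eq,
      ← D.toKCochain_cechDiff _ (skyscraperEval_map x A),
      ← (D.toKCochain_skyscraperEval_bijective x A 1).1.eq_iff, toKCochain_zero]
  refine (injective_and_range_eq_iff_of_comp_eq (skyscraperEval_bijective x A ⊤ trivial)
    (D.toKCochain_skyscraperEval_bijective x A 0) ?_ _).1 (hker ▸ h)
  funext s
  exact D.toKCochain_skyscraperEval_restrictCells x A s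

end CellData

/-- Lemma 3.6: for cell data satisfying (P1) and (P2), the following are
equivalent: (a) for every sheaf of abelian groups `F` on `X`, the map sending a global
section `s` to the family of its restrictions `(s|_{U_σ})_{|σ| = 0}` is injective with
image exactly the kernel of the degree-zero reduced Čech differential; (b) condition
(P3'): for every `x ∈ X` and every abelian group `A`, the map sending `a : A` to the
constant family in `K⁰(Pₓ, A)` is injective with image exactly `ker d⁰`. -/
theorem stmt1 (X : TopCat.{u}) (D : CellData ↥X) :
    (∀ F : TopCat.Sheaf Ab.{u} X,
      Function.Injective
        (fun (s : ↥(F.val.obj (op (⊤ : Opens ↥X)))) =>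
          (fun σ : D.Cells 0 => F.val.map (homOfLE le_top).op s : D.cochain F.val 0)) ∧
      Set.range
        (fun (s : ↥(F.val.obj (op (⊤ : Opens ↥X)))) =>
          (fun σ : D.Cells 0 => F.val.map (homOfLE le_top).op s : D.cochain F.val 0)) =
        {f : D.cochain F.val 0 | D.cechDiff F.val 0 f = 0}) ↔
    D.CondP3 := by
  classical
  constructor
  · intro h x A _
    exact D.condP3_at_of_skyscraper x (AddCommGrpCat.of A)
      (h (skyscraperSheaf x (AddCommGrpCat.of A)))
  · intro hP3 F
    exact ⟨D.restrictCells_injective F hP3, D.range_restrictCells F hP3⟩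
end

section
/- Let X be a semi-proper scheme (the canonical morphism X → Spec Γ(X, O_X) is proper) and let W → X be a closed immersion of schemes. Then W is semi-proper; that is, the canonical morphism W → Spec Γ(W, O_W) is proper. (This is Lemma 4.2(b) of the paper.) -/
open AlgebraicGeometry CategoryTheory

universe u

/-- Lemma 4.2(b): if `X` is a semi-proper scheme (the canonical morphism
`X ⟶ Spec Γ(X, O_X)` is proper) and `W ⟶ X` is a closed immersion, then `W` is
semi-proper: the canonical morphism `W ⟶ Spec Γ(W, O_W)` is proper. -/
theorem stmt7 {X W : Scheme.{u}} (hX : IsProper X.toSpecΓ)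
    (f : W ⟶ X) [IsClosedImmersion f] :
    IsProper W.toSpecΓ := by
  -- `W → Spec Γ(W) → Spec Γ(X)` equals `W → X → Spec Γ(X)`, and `Spec Γ(W) → Spec Γ(X)` is
  -- a morphism of affine schemes, hence separated.
  have : IsProper (W.toSpecΓ ≫ Spec.map f.appTop) := by
    rw [← Scheme.toSpecΓ_naturality]
    infer_instance
  exact .of_comp W.toSpecΓ (Spec.map f.appTop)
end

section
/- Let n ≥ 1 and let C ⊆ ℝⁿ be a nonempty open convex subset with C ≠ ℝⁿ that is closed under multiplication by positive scalars (t·x ∈ C for every x ∈ C and every real t > 0). Then the complement K := S^{n−1} \ C of C in the unit sphere is nonempty and, as a topological subspace of ℝⁿ, is contractible (it has the homotopy type of the complement of a point in S^{n−1}). (This claim is established in the proof of Proposition 4.13 of the paper.) -/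
open Metric

universe u

/-- from the proof of Proposition 4.13: let `n ≥ 1` and let `C ⊆ ℝⁿ` be a
nonempty open convex subset, different from all of `ℝⁿ`, closed under multiplication by
positive scalars.  Then the complement `K := S^{n-1} \ C` of `C` in the unit sphere is
nonempty and contractible (it has the homotopy type of the complement of a point in the
sphere). -/
theorem stmt12 (n : ℕ) (hn : 1 ≤ n) (C : Set (EuclideanSpace ℝ (Fin n)))
    (hne : C.Nonempty) (hproper : C ≠ Set.univ)
    (hopen : IsOpen C) (hconv : Convex ℝ C)
    (hcone : ∀ x ∈ C, ∀ t : ℝ, 0 < t → t • x ∈ C) :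
    (sphere (0 : EuclideanSpace ℝ (Fin n)) 1 \ C).Nonempty ∧
      ContractibleSpace ↥(sphere (0 : EuclideanSpace ℝ (Fin n)) 1 \ C) := by
  -- 0 ∉ C
  have h0 : (0 : EuclideanSpace ℝ (Fin n)) ∉ C := by
    intro h0
    apply hproper
    ext y
    simp only [Set.mem_univ, iff_true]
    rcases Metric.isOpen_iff.mp hopen 0 h0 with ⟨ε, hε, hball⟩
    by_cases hy : y = 0
    · rw [hy]; exact h0
    · have hy0 : (0:ℝ) < ‖y‖ := norm_pos_iff.mpr hy
      have hmem : (ε / (2 * ‖y‖)) • y ∈ C := by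
        apply hball
        rw [mem_ball, dist_zero_right, norm_smul, Real.norm_eq_abs,
          abs_of_pos (by positivity)]
        have hq : ε / (2 * ‖y‖) * ‖y‖ = ε / 2 := by field_simp
        rw [hq]; linarith
      have h2 := hcone _ hmem (2 * ‖y‖ / ε) (by positivity)
      have heq : (2 * ‖y‖ / ε) * (ε / (2 * ‖y‖)) = 1 := by field_simp
      rwa [smul_smul, heq, one_smul] at h2
  have hsum : ∀ a ∈ C, ∀ b ∈ C, a + b ∈ C := by
    intro a ha b hb
    have hmid : (1/2 : ℝ) • a + (1/2 : ℝ) • b ∈ C :=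
      hconv ha hb (by norm_num) (by norm_num) (by norm_num)
    have h2 := hcone _ hmid 2 two_pos
    rwa [smul_add, smul_smul, smul_smul, show (2:ℝ) * (1/2) = 1 by norm_num,
      one_smul, one_smul] at h2
  have hneg : ∀ a ∈ C, -a ∉ C := by
    intro a ha hna
    exact h0 (by simpa using hsum a ha (-a) hna)
  obtain ⟨c, hc⟩ := hne
  have hc0 : c ≠ 0 := fun h => h0 (h ▸ hc)
  set e : EuclideanSpace ℝ (Fin n) := ‖c‖⁻¹ • c with he_def
  have he : e ∈ C := hcone c hc _ (inv_pos.mpr (norm_pos_iff.mpr hc0))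
  have hen : ‖e‖ = 1 := by
    rw [he_def, norm_smul, norm_inv, norm_norm,
      inv_mul_cancel₀ (norm_ne_zero_iff.mpr hc0)]
  have hneK : -e ∈ sphere (0 : EuclideanSpace ℝ (Fin n)) 1 \ C := by
    constructor
    · rw [mem_sphere_zero_iff_norm, norm_neg, hen]
    · exact hneg e he
  -- key: the segment avoids C
  have key : ∀ (t : ℝ), 0 ≤ t → t ≤ 1 → ∀ x : EuclideanSpace ℝ (Fin n), x ∈ sphere (0 : EuclideanSpace ℝ (Fin n)) 1 \ C →
      (1 - t) • x - t • e ∉ C := by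
    intro t ht0 ht1 x hx hv
    rcases lt_or_eq_of_le ht1 with h | h
    · have h1 : (1 - t) • x ∈ C := by
        rcases eq_or_lt_of_le ht0 with h' | h'
        · simpa [← h'] using hv
        · have hs := hsum _ hv _ (hcone e he t h')
          have habel : ((1 - t) • x - t • e) + t • e = (1 - t) • x := by abel
          rwa [habel] at hs
      have h2 := hcone _ h1 (1 - t)⁻¹ (inv_pos.mpr (by linarith))
      rw [smul_smul, inv_mul_cancel₀ (by linarith : (1:ℝ) - t ≠ 0), one_smul] at h2
      exact hx.2 h2
    · rw [h] at hv
      simp only [sub_self, zero_smul, one_smul, zero_sub] at hv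
      exact hneg e he hv
  -- the segment vector is nonzero
  have vne : ∀ (t : ℝ), 0 ≤ t → t ≤ 1 → ∀ x : EuclideanSpace ℝ (Fin n), x ∈ sphere (0 : EuclideanSpace ℝ (Fin n)) 1 \ C →
      (1 - t) • x - t • e ≠ 0 := by
    intro t ht0 ht1 x hx hv
    have hxe : (1 - t) • x = t • e := sub_eq_zero.mp hv
    have hxs : ‖x‖ = 1 := mem_sphere_zero_iff_norm.mp hx.1
    have hnorm : |1 - t| = |t| := by
      have hcg := congrArg norm hxe
      rwa [norm_smul, norm_smul, hxs, hen, mul_one, mul_one, Real.norm_eq_abs,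
        Real.norm_eq_abs] at hcg
    rw [abs_of_nonneg (by linarith), abs_of_nonneg ht0] at hnorm
    have ht : t = 1/2 := by linarith
    rw [ht] at hxe
    norm_num at hxe
    have hxeq : x = e := by
      have h2 : ((2:ℝ) * (1/2)) • x = ((2:ℝ) * (1/2)) • e := by
        rw [mul_smul, mul_smul, hxe]
      norm_num at h2
      exact h2
    exact hx.2 (hxeq ▸ he)
  constructor
  · exact ⟨-e, hneK⟩
  · rw [contractible_iff_id_nullhomotopic]
    refine ⟨⟨-e, hneK⟩, ?_⟩
    set K := sphere (0 : EuclideanSpace ℝ (Fin n)) 1 \ C with hK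
    have hVcont : Continuous (fun p : unitInterval × ↥K =>
        (1 - (p.1 : ℝ)) • (p.2 : EuclideanSpace ℝ (Fin n)) - (p.1 : ℝ) • e) := by
      apply Continuous.sub
      · exact (continuous_const.sub
          ((continuous_subtype_val.comp continuous_fst))).smul
          (continuous_subtype_val.comp continuous_snd)
      · exact (continuous_subtype_val.comp continuous_fst).smul continuous_const
    have hVne : ∀ p : unitInterval × ↥K,
        (1 - (p.1 : ℝ)) • (p.2 : EuclideanSpace ℝ (Fin n)) - (p.1 : ℝ) • e ≠ 0 :=
      fun p => vne p.1 p.1.2.1 p.1.2.2 p.2 p.2.2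
    have hmemK : ∀ p : unitInterval × ↥K,
        ‖(1 - (p.1 : ℝ)) • (p.2 : EuclideanSpace ℝ (Fin n)) - (p.1 : ℝ) • e‖⁻¹ •
          ((1 - (p.1 : ℝ)) • (p.2 : EuclideanSpace ℝ (Fin n)) - (p.1 : ℝ) • e) ∈ K := by
      intro p
      set v : EuclideanSpace ℝ (Fin n) := (1 - (p.1 : ℝ)) • (p.2 : EuclideanSpace ℝ (Fin n)) - (p.1 : ℝ) • e with hv
      have hvne : v ≠ 0 := hVne p
      have hvn : (0:ℝ) < ‖v‖ := norm_pos_iff.mpr hvne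
      constructor
      · rw [mem_sphere_zero_iff_norm, norm_smul, norm_inv, norm_norm,
          inv_mul_cancel₀ (ne_of_gt hvn)]
      · intro hmem
        have h2 := hcone _ hmem ‖v‖ hvn
        rw [smul_smul, mul_inv_cancel₀ (ne_of_gt hvn), one_smul] at h2
        exact key p.1 p.1.2.1 p.1.2.2 p.2 p.2.2 h2
    refine ⟨{
      toFun := fun p => ⟨_, hmemK p⟩
      continuous_toFun := ?_
      map_zero_left := ?_
      map_one_left := ?_ }⟩
    · exact Continuous.subtype_mk
        (((hVcont.norm).inv₀ (fun p => norm_ne_zero_iff.mpr (hVne p))).smul hVcont) _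
    · intro x
      apply Subtype.ext
      have hxs : ‖(x : EuclideanSpace ℝ (Fin n))‖ = 1 := mem_sphere_zero_iff_norm.mp x.2.1
      simp [hxs]
    · intro x
      apply Subtype.ext
      simp [hen]
end

section
/- Let S = ℂ[y₀, y₁, y₂, y₃] be the polynomial ring, graded by ℤ² with deg y₀ = (0,1), deg y₁ = (1,0), deg y₂ = (0,1), and deg y₃ = (1,1). Let M be any ℤ²-graded S-module (so y_i·M_d ⊆ M_{d + deg y_i} for all degrees d) such that M_{(a,b)} is a one-dimensional ℂ-vector space for every (a,b) ∈ ℕ² and M_{(a,b)} = 0 for all other (a,b) ∈ ℤ², and such that multiplication by y₁ is zero on M. Then M is not finitely generated as an S-module. (This is the claim of Example 1.4 of the paper: the module Γ_*(F) of the structure sheaf of a torus-fixed point on the (−1)-curve of the first Hirzebruch surface is not finitely generated over the Cox ring.) -/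
/-!
`y₁` acts by zero and every other variable raises the second degree, so no product `p • m`
has a component in degree `(a, 0)` except the one coming from the constant term of `p`: the
projection `π` onto `M_{(a,0)}` satisfies `π (p • m) = p(0) • π m`. If `M` were generated by
finitely many elements, pick `a ≥ 0` beyond the first degrees of all their homogeneous
components; then `π` kills the generators, hence all of `M`, contradicting `M_{(a,0)} ≠ 0`.
-/

open MvPolynomial

/-- The degrees of the variables `y₀, y₁, y₂, y₃` of the Cox ring of the first Hirzebruch
surface: `deg y₀ = (0,1)`, `deg y₁ = (1,0)`, `deg y₂ = (0,1)`, `deg y₃ = (1,1)`. -/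
def hirzebruchDeg : Fin 4 → ℤ × ℤ := ![(0, 1), (1, 0), (0, 1), (1, 1)]

namespace DirectSum

section Decomposition

variable {M σ : Type*} [AddCommMonoid M] [SetLike σ M] [AddSubmonoidClass σ M]

theorem eventually_cofinite_decompose_eq_zero {ι : Type*} [DecidableEq ι] (𝓜 : ι → σ)
    [Decomposition 𝓜] {s : Set M} (hs : s.Finite) :
    ∀ᶠ i in Filter.cofinite, ∀ m ∈ s, decompose 𝓜 m i = 0 :=
  (Filter.eventually_all_finite hs).2 fun _ _ ↦
    Filter.eventually_cofinite.2 (DFinsupp.finite_support _)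

theorem coe_decompose_map_of_mapsTo_add {ι : Type*} [AddGroup ι] [DecidableEq ι]
    (𝓜 : ι → σ) [Decomposition 𝓜] (g : M →+ M) (δ : ι)
    (hg : ∀ i, ∀ m ∈ 𝓜 i, g m ∈ 𝓜 (i + δ)) (m : M) (j : ι) :
    (decompose 𝓜 (g m) j : M) = g (decompose 𝓜 m (j - δ)) := by
  induction m using Decomposition.inductionOn 𝓜 with
  | zero => simp
  | @homogeneous i m =>
    by_cases hij : i + δ = j
    · subst hij
      rw [decompose_of_mem_same 𝓜 (hg i m m.2), add_sub_cancel_right,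
        decompose_of_mem_same 𝓜 m.2]
    · have hij' : i ≠ j - δ := fun h ↦ hij (by rw [h, sub_add_cancel])
      rw [decompose_of_mem_ne 𝓜 (hg i m m.2) hij, decompose_of_mem_ne 𝓜 m.2 hij', map_zero]
  | add m m' hm hm' => simp only [map_add, decompose_add, add_apply, AddMemClass.coe_add, hm, hm']

end Decomposition

variable {ι R M : Type*} [DecidableEq ι] [Semiring R] [AddCommMonoid M] [Module R M]
  (𝓜 : ι → Submodule R M) [Decomposition 𝓜]

noncomputable def decomposeProj (i : ι) : M →ₗ[R] M :=
  (𝓜 i).subtype ∘ₗ component R ι (fun i ↦ 𝓜 i) i ∘ₗ (decomposeLinearEquiv 𝓜).toLinearMap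

@[simp]
theorem decomposeProj_apply (i : ι) (m : M) : decomposeProj 𝓜 i m = decompose 𝓜 m i := rfl

end DirectSum

namespace MvPolynomial

variable {σ R M N : Type*} [CommSemiring R] [AddCommMonoid M] [Module (MvPolynomial σ R) M]
  [Module R M] [IsScalarTower R (MvPolynomial σ R) M] [AddCommMonoid N] [Module R N]
  {f : M →ₗ[R] N}

theorem map_smul_eq_constantCoeff_smul (hf : ∀ i m, f ((X i : MvPolynomial σ R) • m) = 0)
    (p : MvPolynomial σ R) (m : M) : f (p • m) = constantCoeff p • f m := by
  induction p using MvPolynomial.induction_on generalizing m with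
  | C c => rw [constantCoeff_C, ← algebraMap_eq, algebraMap_smul, f.map_smul]
  | add p q hp hq => rw [add_smul, map_add, hp, hq, map_add, add_smul]
  | mul_X p i hp => rw [mul_smul, hp, hf, smul_zero, map_mul, constantCoeff_X, mul_zero, zero_smul]

theorem map_eq_zero_of_mem_span (hf : ∀ i m, f ((X i : MvPolynomial σ R) • m) = 0) {s : Set M}
    (hs : ∀ m ∈ s, f m = 0) {m : M} (hm : m ∈ Submodule.span (MvPolynomial σ R) s) : f m = 0 := by
  induction hm using Submodule.span_induction with
  | mem x hx => exact hs x hx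
  | zero => exact map_zero f
  | add x y _ _ hx hy => rw [map_add, hx, hy, add_zero]
  | smul p x _ hx => rw [map_smul_eq_constantCoeff_smul hf, hx, smul_zero]

end MvPolynomial

theorem hirzebruchDeg_snd_of_ne_one {i : Fin 4} (hi : i ≠ 1) : (hirzebruchDeg i).2 = 1 := by
  revert i
  decide

/-- Example 1.4: let `S = ℂ[y₀, y₁, y₂, y₃]` be graded by `ℤ²` with
`deg y₀ = (0,1)`, `deg y₁ = (1,0)`, `deg y₂ = (0,1)`, `deg y₃ = (1,1)`.  If `M` is a
`ℤ²`-graded `S`-module whose graded piece `M_{(a,b)}` is a one-dimensional `ℂ`-vector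
space for every `(a,b) ∈ ℕ²` and zero otherwise, and on which multiplication by `y₁`
is zero, then `M` is not a finitely generated `S`-module. -/
theorem stmt13 (M : Type) [AddCommGroup M]
    [Module (MvPolynomial (Fin 4) ℂ) M] [Module ℂ M]
    [IsScalarTower ℂ (MvPolynomial (Fin 4) ℂ) M]
    (grade : ℤ × ℤ → Submodule ℂ M)
    (hdirect : DirectSum.IsInternal grade)
    (hcompat : ∀ (i : Fin 4) (d : ℤ × ℤ), ∀ m ∈ grade d,
      (X i : MvPolynomial (Fin 4) ℂ) • m ∈ grade (d + hirzebruchDeg i))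
    (hrank : ∀ a b : ℤ, 0 ≤ a → 0 ≤ b → Module.rank ℂ ↥(grade (a, b)) = 1)
    (hzero : ∀ a b : ℤ, ¬(0 ≤ a ∧ 0 ≤ b) → grade (a, b) = ⊥)
    (hy1 : ∀ m : M, (X 1 : MvPolynomial (Fin 4) ℂ) • m = 0) :
    ¬ Module.Finite (MvPolynomial (Fin 4) ℂ) M := by
  classical
  let _ := hdirect.chooseDecomposition
  rintro ⟨s, hs⟩
  have hproj (a : ℤ) (i : Fin 4) (m : M) :
      DirectSum.decomposeProj grade (a, 0) ((X i : MvPolynomial (Fin 4) ℂ) • m) = 0 := by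
    refine (DirectSum.coe_decompose_map_of_mapsTo_add grade
      (DistribSMul.toAddMonoidHom M (X i)) _ (hcompat i) m (a, 0)).trans ?_
    by_cases hi : i = 1
    · exact hi ▸ hy1 _
    · have hbot : grade ((a, 0) - hirzebruchDeg i) = ⊥ :=
        hzero _ _ (by simp [hirzebruchDeg_snd_of_ne_one hi])
      simp [(Submodule.eq_bot_iff _).1 hbot _ (SetLike.coe_mem _)]
  obtain ⟨a, ha0, hs0⟩ := ((Filter.eventually_ge_atTop 0).and
    (Filter.atTop_le_cofinite ((Prod.mk_left_injective (0 : ℤ)).tendsto_cofinite.eventually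
      (DirectSum.eventually_cofinite_decompose_eq_zero grade s.finite_toSet)))).exists
  obtain ⟨v, hv0⟩ := rank_pos_iff_exists_ne_zero.1 (hrank a 0 ha0 le_rfl ▸ zero_lt_one)
  refine hv0 (Submodule.coe_eq_zero.1 ?_)
  rw [← DirectSum.decompose_of_mem_same grade v.2, ← DirectSum.decomposeProj_apply]
  exact MvPolynomial.map_eq_zero_of_mem_span (hproj a) (fun m hm ↦ by simp [hs0 m hm])
    (hs ▸ Submodule.mem_top)
end

section
/- Let φ : ℂ[Y₁₁, Y₁₂, Y₂₁, Y₂₂] → ℂ[Z₁, Z₂, W₁, W₂] be the ℂ-algebra homomorphism determined by φ(Y_{ij}) = Z_i·W_j for i, j ∈ {1,2}. Then ℂ[Z₁, Z₂, W₁, W₂], regarded as a module over ℂ[Y₁₁, Y₁₂, Y₂₁, Y₂₂] via φ, is not finitely generated; i.e., φ is not a finite ring homomorphism. (This is the claim made in §4 of the paper: the Cox ring of ℙ¹×ℙ¹ is not a finite module over the Cox ring of ℙ³ under the homomorphism induced by the Segre embedding.) -/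
open MvPolynomial

/-! Every `Y_{ij}` maps to a product containing some `W_j`, so the specialization
`Z₁ ↦ T`, `Z₂, W₁, W₂ ↦ 0` into `ℂ[T]` sends the whole image of `φ` to the constants. If `φ`
were finite, `Z₁` would be integral over that image, hence `T` integral over `ℂ`; but `T` is
transcendental. -/

theorem RingHom.not_isIntegral_of_comp_eq_C_comp {R A B : Type*} [CommRing R] [Nontrivial R]
    [CommRing A] [CommRing B] {f : A →+* B} {k : A →+* R} (g : B →+* Polynomial R)
    (hcomp : g.comp f = Polynomial.C.comp k) {x : B} (hx : g x = Polynomial.X) :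
    ¬ f.IsIntegral := by
  intro hf
  have hX := (hf x).map g
  rw [hcomp, hx] at hX
  exact Polynomial.transcendental_X R (IsIntegral.isAlgebraic hX.of_comp)

/-- §4: the `ℂ`-algebra homomorphism
`ℂ[Y₁₁, Y₁₂, Y₂₁, Y₂₂] → ℂ[Z₁, Z₂, W₁, W₂]`, `Y_{ij} ↦ Z_i · W_j` (the homomorphism of
Cox rings induced by the Segre embedding `ℙ¹ × ℙ¹ ↪ ℙ³`) is not a finite ring
homomorphism: the target is not finitely generated as a module over the source. -/
theorem stmt14 :
    ¬ RingHom.Finite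
      (MvPolynomial.aeval (R := ℂ)
        (fun p : Fin 2 × Fin 2 =>
          (X (Sum.inl p.1) * X (Sum.inr p.2) :
            MvPolynomial (Fin 2 ⊕ Fin 2) ℂ))).toRingHom := by
  let ψ : MvPolynomial (Fin 2 ⊕ Fin 2) ℂ →+* Polynomial ℂ :=
    eval₂Hom Polynomial.C (Pi.single (Sum.inl 0) Polynomial.X)
  have hψ_X : ψ (X (Sum.inl 0)) = Polynomial.X := by simp [ψ]
  refine fun h => RingHom.not_isIntegral_of_comp_eq_C_comp ψ ?_ hψ_X h.to_isIntegral
    (k := constantCoeff)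
  exact MvPolynomial.ringHom_ext (fun c => by simp [ψ]) (fun p => by simp [ψ])
end
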